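/- The space V_{[k-1]}(D;ℝ³) := P_{k-1,k-2,k-2} × P_{k-2,k-1,k-2} × P_{k-2,k-2,k-1} admits the direct sum decomposition V_{[k-1]} = curl M_{[k-1]} ⊕ x·Q_{k-2}, where M_{[k-1]} := P_{k-2,k-1,k-1} × P_{k-1,k-2,k-1} × P_{k-1,k-1,k-2} and x·Q_{k-2} := {x q : q ∈ Q_{k-2}}. -/

import Mathlib

open MvPolynomial

noncomputable section

abbrev P3 : Type := MvPolynomial (Fin 3) ℝ

/-- `Qb m q` : `q` has degree at most `m` in each of the three variables. -/
def Qb (m : ℕ) (q : P3) : Prop := ∀ i, q.degreeOf i ≤ m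

/-- Membership in `M_{[k-1]} = P_{k-2,k-1,k-1} × P_{k-1,k-2,k-1} × P_{k-1,k-1,k-2}`. -/
def Mb (k : ℕ) (u : Fin 3 → P3) : Prop :=
  ∀ i j, (u i).degreeOf j ≤ if j = i then k - 2 else k - 1

/-- Membership in `V_{[k-1]} = P_{k-1,k-2,k-2} × P_{k-2,k-1,k-2} × P_{k-2,k-2,k-1}`. -/
def Vb (k : ℕ) (v : Fin 3 → P3) : Prop :=
  ∀ i j, (v i).degreeOf j ≤ if j = i then k - 1 else k - 2

/-- Gradient of a polynomial. -/
def gradP (q : P3) : Fin 3 → P3 := fun i => pderiv i q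

/-- Curl of a polynomial vector field. -/
def curlP (w : Fin 3 → P3) : Fin 3 → P3 :=
  ![pderiv 1 (w 2) - pderiv 2 (w 1),
    pderiv 2 (w 0) - pderiv 0 (w 2),
    pderiv 0 (w 1) - pderiv 1 (w 0)]

/-- Divergence of a polynomial vector field. -/
def divP (v : Fin 3 → P3) : P3 := ∑ i, pderiv i (v i)
/-- total degree of an exponent vector -/
def dsum (m : Fin 3 →₀ ℕ) : ℕ := ∑ i, m i

lemma dsum_add (m n : Fin 3 →₀ ℕ) : dsum (m + n) = dsum m + dsum n := by
  simp [dsum, Finsupp.add_apply, Finset.sum_add_distrib]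

lemma dsum_single (i : Fin 3) : dsum (Finsupp.single i 1) = 1 := by
  simp [dsum, Finsupp.single_apply]

/-- weighted rescaling of monomials by a function of total degree -/
def Tw (f : ℕ → ℝ) (p : P3) : P3 :=
  ∑ m ∈ p.support, C (f (dsum m)) * monomial m (coeff m p)

lemma coeff_Tw (f : ℕ → ℝ) (p : P3) (m : Fin 3 →₀ ℕ) :
    coeff m (Tw f p) = f (dsum m) * coeff m p := by
  classical
  rw [Tw, coeff_sum]
  rw [Finset.sum_eq_single m]
  · by_cases h : m ∈ p.support
    · simp [coeff_monomial]
    · simp only [mem_support_iff, not_not] at h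
      simp [coeff_monomial, h]
  · intro b _ hb
    simp [coeff_monomial, coeff_C_mul, hb]
  · intro h
    simp only [mem_support_iff, not_not] at h
    simp [coeff_monomial, h]

/-- coefficient formula for `pderiv` -/
lemma coeff_pderiv (i : Fin 3) (p : P3) (m : Fin 3 →₀ ℕ) :
    coeff m (pderiv i p) = ((m i : ℝ) + 1) * coeff (m + Finsupp.single i 1) p := by
  classical
  induction p using MvPolynomial.induction_on' with
  | monomial s a =>
    rw [pderiv_monomial]
    rw [coeff_monomial, coeff_monomial]
    by_cases hs : s = m + Finsupp.single i 1
    · subst hs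
      have h1 : m + Finsupp.single i 1 - Finsupp.single i 1 = m := by
        simp
      have h2 : ((m + Finsupp.single i 1 : Fin 3 →₀ ℕ)) i = m i + 1 := by
        simp
      rw [if_pos h1, h2]
      simp
      ring
    · rw [if_neg hs]
      by_cases hd : s - Finsupp.single i 1 = m
      · by_cases hz : s i = 0
        · simp [hd, hz]
        · exfalso
          apply hs
          rw [← hd, tsub_add_cancel_of_le]
          rw [Finsupp.single_le_iff]
          omega
      · simp [hd]
  | add p q hp hq =>
    simp [coeff_add, hp, hq, map_add]
    ring
/-- Euler operator `E p = Σ xᵢ ∂ᵢ p` -/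
def Eop (p : P3) : P3 := ∑ i, pderiv i p * X i

lemma coeff_Eop (p : P3) (m : Fin 3 →₀ ℕ) :
    coeff m (Eop p) = (dsum m : ℝ) * coeff m p := by
  classical
  rw [Eop, coeff_sum]
  have h : ∀ i : Fin 3, coeff m (pderiv i p * X i) = (m i : ℝ) * coeff m p := by
    intro i
    rw [coeff_mul_X']
    by_cases hz : m i = 0
    · simp [Finsupp.mem_support_iff, hz]
    · rw [if_pos (by simp [Finsupp.mem_support_iff, hz])]
      rw [coeff_pderiv]
      have h1 : (m - Finsupp.single i 1) + Finsupp.single i 1 = m := by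
        rw [tsub_add_cancel_of_le]
        rw [Finsupp.single_le_iff]
        omega
      have h2 : ((m - Finsupp.single i 1 : Fin 3 →₀ ℕ)) i = m i - 1 := by
        simp [Finsupp.tsub_apply]
      rw [h1, h2]
      congr 1
      rw [Nat.cast_sub (by omega : 1 ≤ m i)]
      push_cast
      ring
  simp only [h, dsum]
  push_cast
  rw [Finset.sum_mul]

/-- the weight used for inversion -/
def fc (c : ℕ) : ℕ → ℝ := fun n => ((n + c : ℕ) : ℝ)⁻¹

lemma key1 (c : ℕ) (hc : c ≠ 0) (p : P3) :
    C ((c : ℕ) : ℝ) * Tw (fc c) p + Eop (Tw (fc c) p) = p := by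
  apply MvPolynomial.ext
  intro m
  rw [coeff_add, coeff_C_mul, coeff_Eop, coeff_Tw]
  have hne : ((dsum m + c : ℕ) : ℝ) ≠ 0 := by
    push_cast
    positivity
  have h : (c : ℝ) * (fc c (dsum m) * coeff m p) + (dsum m : ℝ) * (fc c (dsum m) * coeff m p)
      = (((dsum m + c : ℕ) : ℝ) * fc c (dsum m)) * coeff m p := by push_cast; ring
  rw [h, fc, mul_inv_cancel₀ hne, one_mul]

lemma key2 (c : ℕ) (hc : c ≠ 0) (p : P3) :
    Tw (fc c) (C ((c : ℕ) : ℝ) * p + Eop p) = p := by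
  apply MvPolynomial.ext
  intro m
  rw [coeff_Tw, coeff_add, coeff_C_mul, coeff_Eop]
  have hne : ((dsum m + c : ℕ) : ℝ) ≠ 0 := by
    push_cast
    positivity
  have h : fc c (dsum m) * ((c : ℝ) * coeff m p + (dsum m : ℝ) * coeff m p)
      = (((dsum m + c : ℕ) : ℝ) * fc c (dsum m)) * coeff m p := by push_cast; ring
  rw [h, fc, mul_inv_cancel₀ hne, one_mul]

lemma pderiv_Tw (f : ℕ → ℝ) (i : Fin 3) (p : P3) :
    pderiv i (Tw f p) = Tw (fun n => f (n + 1)) (pderiv i p) := by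
  apply MvPolynomial.ext
  intro m
  rw [coeff_pderiv, coeff_Tw, coeff_Tw, coeff_pderiv]
  rw [dsum_add, dsum_single]
  ring

lemma pderiv_comm' (i j : Fin 3) (p : P3) :
    pderiv i (pderiv j p) = pderiv j (pderiv i p) := by
  apply MvPolynomial.ext
  intro m
  rw [coeff_pderiv, coeff_pderiv, coeff_pderiv, coeff_pderiv]
  by_cases hij : i = j
  · subst hij; rfl
  · have h1 : ((m + Finsupp.single i 1 : Fin 3 →₀ ℕ)) j = m j := by
      rw [Finsupp.add_apply, Finsupp.single_apply, if_neg hij, add_zero]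
    have h2 : ((m + Finsupp.single j 1 : Fin 3 →₀ ℕ)) i = m i := by
      rw [Finsupp.add_apply, Finsupp.single_apply, if_neg (fun h => hij h.symm), add_zero]
    rw [h1, h2, add_right_comm]
    ring

lemma support_Tw (f : ℕ → ℝ) (p : P3) :
    (Tw f p).support ⊆ p.support := by
  intro m hm
  rw [mem_support_iff] at hm ⊢
  intro h
  rw [coeff_Tw, h, mul_zero] at hm
  exact hm rfl

lemma degreeOf_Tw_le (f : ℕ → ℝ) (j : Fin 3) (p : P3) :
    (Tw f p).degreeOf j ≤ p.degreeOf j := by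
  rw [degreeOf_le_iff]
  intro m hm
  exact monomial_le_degreeOf j (support_Tw f p hm)

lemma degreeOf_pderiv_le (i j : Fin 3) (p : P3) :
    (pderiv i p).degreeOf j ≤ p.degreeOf j - (if j = i then 1 else 0) := by
  rw [degreeOf_le_iff]
  intro m hm
  rw [mem_support_iff, coeff_pderiv] at hm
  have hmem : m + Finsupp.single i 1 ∈ p.support := by
    rw [mem_support_iff]
    intro h
    rw [h, mul_zero] at hm
    exact hm rfl
  have hle := monomial_le_degreeOf j hmem
  by_cases hji : j = i
  · subst hji
    have happ : ((m + Finsupp.single j 1 : Fin 3 →₀ ℕ)) j = m j + 1 := by simp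
    rw [happ] at hle
    simp only [if_pos rfl, if_true]
    omega
  · have happ : ((m + Finsupp.single i 1 : Fin 3 →₀ ℕ)) j = m j := by
      rw [Finsupp.add_apply, Finsupp.single_apply, if_neg (fun h => hji h.symm), add_zero]
    rw [happ] at hle
    simp only [if_neg hji]
    omega



lemma Tw_zero (f : ℕ → ℝ) : Tw f (0 : P3) = 0 := by
  simp [Tw]

lemma Tw_add (f : ℕ → ℝ) (p q : P3) : Tw f (p + q) = Tw f p + Tw f q := by
  apply MvPolynomial.ext
  intro m
  simp [coeff_Tw, coeff_add, mul_add]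

lemma fc_shift : (fun n => fc 2 (n + 1)) = fc 3 := by
  funext n
  have h : n + 1 + 2 = n + 3 := by omega
  simp [fc, h]

lemma divP_curlP (w : Fin 3 → P3) : divP (curlP w) = 0 := by
  simp only [divP, curlP, Fin.sum_univ_three, Matrix.cons_val_zero, Matrix.cons_val_one,
    Matrix.head_cons, Matrix.cons_val_two, Matrix.tail_cons, map_sub]
  rw [pderiv_comm' 0 1 (w 2), pderiv_comm' 0 2 (w 1), pderiv_comm' 1 2 (w 0)]
  ring

/-- `a × x` componentwise -/
def crossX (a : Fin 3 → P3) : Fin 3 → P3 :=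
  ![a 1 * X 2 - a 2 * X 1, a 2 * X 0 - a 0 * X 2, a 0 * X 1 - a 1 * X 0]

lemma curl_crossX (a : Fin 3 → P3) :
    curlP (crossX a) = fun i => C ((2 : ℕ) : ℝ) * a i + Eop (a i) - X i * divP a := by
  funext i
  fin_cases i <;>
  · simp only [curlP, crossX, divP, Eop, Fin.sum_univ_three, Matrix.cons_val_zero,
      Matrix.cons_val_one, Matrix.head_cons, Matrix.cons_val_two, Matrix.tail_cons,
      map_sub, pderiv_mul]
    simp [pderiv_X, Pi.single_apply, map_natCast, map_ofNat]
    ring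

lemma divP_xq (q : P3) : divP (fun i => X i * q) = C ((3 : ℕ) : ℝ) * q + Eop q := by
  simp only [divP, Eop, Fin.sum_univ_three, pderiv_mul, pderiv_X_self, one_mul]
  simp [map_natCast, map_ofNat]
  ring

lemma divP_sub (a b : Fin 3 → P3) : divP (fun i => a i - b i) = divP a - divP b := by
  simp [divP, map_sub, Finset.sum_sub_distrib]

lemma divP_Tw (a : Fin 3 → P3) :
    divP (fun i => Tw (fc 2) (a i)) = Tw (fc 3) (divP a) := by
  simp only [divP, Fin.sum_univ_three, pderiv_Tw, fc_shift, Tw_add]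
lemma degreeOf_mul_X_le (j b : Fin 3) (p : P3) (n : ℕ) (hp : p.degreeOf j ≤ n) :
    (p * X b).degreeOf j ≤ n + if j = b then 1 else 0 :=
  le_trans (degreeOf_mul_le _ _ _) (add_le_add hp (degreeOf_X j b).le)

lemma crossX_Mb (k : ℕ) (hk : 2 ≤ k) (a : Fin 3 → P3)
    (ha : ∀ i j, (a i).degreeOf j ≤ if j = i then k - 1 else k - 2) :
    Mb k (crossX a) := by
  intro i j
  fin_cases i <;> fin_cases j <;>
    simp only [crossX, Matrix.cons_val_zero, Matrix.cons_val_one, Matrix.head_cons,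
      Matrix.cons_val_two, Matrix.tail_cons] <;>
    refine le_trans (degreeOf_sub_le _ _ _) (max_le
      (le_trans (degreeOf_mul_X_le _ _ _ _ (ha _ _)) ?_)
      (le_trans (degreeOf_mul_X_le _ _ _ _ (ha _ _)) ?_)) <;>
    · norm_num [Fin.ext_iff] <;> omega

/-- Direct sum decomposition `V_{[k-1]} = curl M_{[k-1]} ⊕ x·Q_{k-2}`:
every element of `V_{[k-1]}` decomposes, and the intersection is trivial. -/
theorem V_eq_curlM_directSum_xQ (k : ℕ) (hk : 2 ≤ k) :
    (∀ v : Fin 3 → P3, Vb k v →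
      ∃ (w : Fin 3 → P3) (q : P3), Mb k w ∧ Qb (k - 2) q ∧
        v = fun i => curlP w i + X i * q) ∧
    (∀ (w : Fin 3 → P3) (q : P3), Mb k w → Qb (k - 2) q →
      curlP w = (fun i => X i * q) → q = 0) := by
  constructor
  · intro v hv
    refine ⟨crossX (fun i => Tw (fc 2) (v i - X i * Tw (fc 3) (divP v))),
      Tw (fc 3) (divP v), ?_, ?_, ?_⟩
    · -- Mb bound
      apply crossX_Mb k hk
      intro i j
      refine le_trans (degreeOf_Tw_le _ _ _) ?_
      refine le_trans (degreeOf_sub_le _ _ _) ?_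
      have h1 := hv i j
      have hdv : (divP v).degreeOf j ≤ k - 2 := by
        have hb : ∀ i : Fin 3, (pderiv i (v i)).degreeOf j ≤ k - 2 := by
          intro i'
          refine le_trans (degreeOf_pderiv_le i' j (v i')) ?_
          have := hv i' j
          by_cases hji : j = i'
          · simp only [if_pos hji] at this ⊢
            omega
          · simp only [if_neg hji] at this ⊢
            omega
        have hdef : divP v = pderiv 0 (v 0) + pderiv 1 (v 1) + pderiv 2 (v 2) := by
          rw [divP, Fin.sum_univ_three]
        rw [hdef]
        exact le_trans (degreeOf_add_le _ _ _)
          (max_le (le_trans (degreeOf_add_le _ _ _) (max_le (hb 0) (hb 1))) (hb 2))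
      have h2 : (X i * Tw (fc 3) (divP v)).degreeOf j
          ≤ (if j = i then 1 else 0) + (k - 2) := by
        refine le_trans (degreeOf_mul_le _ _ _) ?_
        exact add_le_add (degreeOf_X j i).le (le_trans (degreeOf_Tw_le _ _ _) hdv)
      by_cases hji : j = i
      · simp only [if_pos hji] at h1 h2 ⊢
        refine max_le h1 (le_trans h2 ?_)
        omega
      · simp only [if_neg hji] at h1 h2 ⊢
        refine max_le h1 (le_trans h2 ?_)
        omega
    · -- Qb bound
      intro j
      refine le_trans (degreeOf_Tw_le _ _ _) ?_
      have hb : ∀ i : Fin 3, (pderiv i (v i)).degreeOf j ≤ k - 2 := by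
        intro i'
        refine le_trans (degreeOf_pderiv_le i' j (v i')) ?_
        have := hv i' j
        by_cases hji : j = i'
        · simp only [if_pos hji] at this ⊢
          omega
        · simp only [if_neg hji] at this ⊢
          omega
      have hdef : divP v = pderiv 0 (v 0) + pderiv 1 (v 1) + pderiv 2 (v 2) := by
        rw [divP, Fin.sum_univ_three]
      rw [hdef]
      exact le_trans (degreeOf_add_le _ _ _)
        (max_le (le_trans (degreeOf_add_le _ _ _) (max_le (hb 0) (hb 1))) (hb 2))
    · -- decomposition identity
      have key3 := key1 3 (by norm_num) (divP v)
      have hdivu : divP (fun i => v i - X i * Tw (fc 3) (divP v)) = 0 := by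
        rw [divP_sub, divP_xq, key3, sub_self]
      have hdiva : divP (fun i => Tw (fc 2) (v i - X i * Tw (fc 3) (divP v))) = 0 := by
        rw [divP_Tw, hdivu, Tw_zero]
      have hcurl := curl_crossX (fun i => Tw (fc 2) (v i - X i * Tw (fc 3) (divP v)))
      rw [hdiva] at hcurl
      funext i
      rw [hcurl]
      have hk2 := key1 2 (by norm_num) (v i - X i * Tw (fc 3) (divP v))
      simp only
      rw [mul_zero, sub_zero, hk2]
      ring
  · -- trivial intersection
    intro w q _ _ heq
    have h0 : C ((3 : ℕ) : ℝ) * q + Eop q = 0 := by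
      rw [← divP_xq, ← heq, divP_curlP]
    have h2 := key2 3 (by norm_num) q
    rw [h0, Tw_zero] at h2
    exact h2.symm


end
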